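/- arXiv:1304.6887 — 9 statements merged into one kernel-verified Lean document; each statement's English description precedes it below -/
import Mathlib

section
/- Let k > 1 be an odd integer and let d = k² + 4. Then the pair (x₁, y₁) = ((k³ + 3k)/2, (k² + 1)/2) is the fundamental solution of the Pell equation x² − d·y² = −1; that is, it is a positive integer solution, and every other positive integer solution (x, y) satisfies x₁ < x and y₁ < y. -/
/-- `(x₁, y₁)` is the fundamental solution of `x² - d·y² = N`: it is a positive integer
solution, and every other positive integer solution `(x, y)` satisfies `x₁ < x` and `y₁ < y`. -/
def IsFundamentalSolution (d N x₁ y₁ : ℤ) : Prop :=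
  0 < x₁ ∧ 0 < y₁ ∧ x₁ ^ 2 - d * y₁ ^ 2 = N ∧
    ∀ x y : ℤ, 0 < x → 0 < y → x ^ 2 - d * y ^ 2 = N → (x, y) ≠ (x₁, y₁) → x₁ < x ∧ y₁ < y

lemma no_small_sol (k x y : ℤ) (hk : 1 < k) (hx : 0 < x) (hy : 0 < y)
    (heq : x ^ 2 - (k ^ 2 + 4) * y ^ 2 = -1) (hsm : 2 * y ≤ k ^ 2 - 1) : False := by
  have hk0 : (0:ℤ) < k := by linarith
  have hkx : (0:ℤ) < k * x := mul_pos hk0 hx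
  have key : k ^ 2 * x ^ 2 = (k ^ 2 + 2) ^ 2 * y ^ 2 - 4 * y ^ 2 - k ^ 2 := by nlinarith [heq]
  rcases lt_trichotomy (k * x) ((k ^ 2 + 2) * y) with h | h | h
  · have h1 : k * x ≤ (k ^ 2 + 2) * y - 1 := by linarith
    have ha : (0:ℤ) ≤ (k ^ 2 + 2) * y - 1 - k * x := by linarith
    have hb : (0:ℤ) ≤ (k ^ 2 + 2) * y - 1 + k * x := by nlinarith
    have hab := mul_nonneg ha hb
    -- gives ((k²+2)y-1)² ≥ k²x², i.e. 4y²+k²+1 ≥ 2(k²+2)y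
    have hc : (0:ℤ) < 2 * y - 1 := by linarith
    have hd : (0:ℤ) < k ^ 2 + 1 - 2 * y := by linarith
    nlinarith [mul_pos hc hd, hab, key]
  · have h2 : (k * x) ^ 2 = ((k ^ 2 + 2) * y) ^ 2 := by rw [h]
    nlinarith [h2, key, sq_nonneg y, hy]
  · have h1 : (k ^ 2 + 2) * y + 1 ≤ k * x := by linarith
    have ha : (0:ℤ) ≤ k * x - ((k ^ 2 + 2) * y + 1) := by linarith
    have hb : (0:ℤ) ≤ k * x + (k ^ 2 + 2) * y + 1 := by nlinarith
    have hab := mul_nonneg ha hb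
    nlinarith [hab, key, sq_nonneg y, hy]

theorem fundamental_solution_neg_one_of_odd (k x₁ y₁ : ℤ) (hk : 1 < k) (hodd : Odd k)
    (hx₁ : 2 * x₁ = k ^ 3 + 3 * k) (hy₁ : 2 * y₁ = k ^ 2 + 1) :
    IsFundamentalSolution (k ^ 2 + 4) (-1) x₁ y₁ := by
  have hx₁pos : 0 < x₁ := by nlinarith
  have hy₁pos : 0 < y₁ := by nlinarith
  have hsol : x₁ ^ 2 - (k ^ 2 + 4) * y₁ ^ 2 = -1 := by
    have h5 : (2 * x₁) ^ 2 - (k ^ 2 + 4) * (2 * y₁) ^ 2 = -4 := by rw [hx₁, hy₁]; ring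
    linarith [h5]
  refine ⟨hx₁pos, hy₁pos, hsol, ?_⟩
  intro x y hx hy heq hne
  have hyge : y₁ ≤ y := by
    by_contra hlt
    push_neg at hlt
    exact no_small_sol k x y hk hx hy heq (by omega)
  have hygt : y₁ < y := by
    rcases lt_or_eq_of_le hyge with h | h
    · exact h
    · exfalso
      apply hne
      have hxx : x ^ 2 = x₁ ^ 2 := by rw [← h] at heq; linarith
      have : (x - x₁) * (x + x₁) = 0 := by ring_nf; linarith [hxx]
      rcases mul_eq_zero.mp this with h0 | h0
      · have : x = x₁ := by linarith
        simp [this, ← h]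
      · exfalso; linarith
  refine ⟨?_, hygt⟩
  by_contra hxle
  push_neg at hxle
  have h6 : y₁ ^ 2 < y ^ 2 := by nlinarith
  have h7 : x ^ 2 ≤ x₁ ^ 2 := by nlinarith
  nlinarith [h6, h7, hsol, heq, mul_pos (show (0:ℤ) < k ^ 2 + 4 by positivity) (sub_pos.2 h6)]
end

section
/- Let k > 1 and let d = k² + 4. If k is even, then the fundamental solution of the Pell equation x² − d·y² = 1 is (x₁, y₁) = ((k² + 2)/2, k/2). If k is odd, then the fundamental solution of x² − d·y² = 1 is (x₁, y₁) = (((k³ + 3k)² + 2)/2, (k³ + 3k)(k² + 1)/2), i.e. the solution obtained by squaring (k³ + 3k)/2 + ((k² + 1)/2)·√d. -/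
private lemma sq_le_imp (a b : ℤ) (hb : 0 ≤ b) (h : a ^ 2 ≤ b ^ 2) : a ≤ b := by nlinarith

private lemma sq_lt_imp (a b : ℤ) (ha : 0 ≤ a) (hb : 0 ≤ b) (h : a ^ 2 < b ^ 2) : a < b := by
  nlinarith

private lemma sq_eq_imp (a b : ℤ) (ha : 0 ≤ a) (hb : 0 ≤ b) (h : a ^ 2 = b ^ 2) : a = b :=
  le_antisymm (sq_le_imp a b hb h.le) (sq_le_imp b a ha h.ge)

private lemma sqb (a b : ℤ) (ha : 0 ≤ a) (h : a ≤ b) : a ^ 2 ≤ b ^ 2 := by nlinarith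

private lemma descent (k u v e : ℤ) (hk : 1 < k) (hu : 0 < u) (hv : 0 < v)
    (hn : u ^ 2 - (k ^ 2 + 4) * v ^ 2 = e) (he : e = 4 ∨ (e = -4 ∧ 2 ≤ v)) :
    ∃ u₁ v₁ : ℤ, 0 < u₁ ∧ 0 < v₁ ∧ u₁ ^ 2 - (k ^ 2 + 4) * v₁ ^ 2 = -e ∧
      2 * u = k * u₁ + (k ^ 2 + 4) * v₁ ∧ 2 * v = u₁ + k * v₁ := by
  have hv2 : 1 ≤ v ^ 2 := by nlinarith
  have hukv : k * v < u := by
    refine sq_lt_imp _ _ (by positivity) hu.le ?_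
    have hexp : u ^ 2 - (k * v) ^ 2 = e + 4 * v ^ 2 := by linear_combination hn
    rcases he with he | ⟨he, hvge⟩
    · subst he; linarith
    · subst he
      have : 4 ≤ v ^ 2 := by nlinarith
      linarith
  have hprodeq : (u - k * v) * (u + k * v) = e + 4 * v ^ 2 := by linear_combination hn
  have hprod : Even ((u - k * v) * (u + k * v)) := by
    rcases he with he | ⟨he, _⟩ <;> subst he <;> rw [hprodeq]
    · exact ⟨2 * v ^ 2 + 2, by ring⟩
    · exact ⟨2 * v ^ 2 - 2, by ring⟩
  have heven : Even (u - k * v) := by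
    rcases Int.even_mul.mp hprod with h | h
    · exact h
    · obtain ⟨r, hr⟩ := h
      exact ⟨r - k * v, by linarith⟩
  obtain ⟨w, hw⟩ := heven
  have hwpos : 0 < w := by linarith
  have hu₁pos : 0 < 2 * v - k * w := by
    have h1 : (k * u) ^ 2 < ((k ^ 2 + 4) * v) ^ 2 := by
      have hexp : ((k ^ 2 + 4) * v) ^ 2 - (k * u) ^ 2
          = 4 * (k ^ 2 + 4) * v ^ 2 - k ^ 2 * e := by linear_combination (-(k ^ 2)) * hn
      have h3 : 0 ≤ (k ^ 2 + 4) * (v ^ 2 - 1) := mul_nonneg (by positivity) (by linarith)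
      rcases he with he | ⟨he, _⟩ <;> subst he <;> nlinarith
    have h2 : k * u < (k ^ 2 + 4) * v := sq_lt_imp _ _ (by positivity) (by positivity) h1
    have hw2 : k * u - k ^ 2 * v = 2 * (k * w) := by linear_combination k * hw
    linarith
  refine ⟨2 * v - k * w, w, hu₁pos, hwpos, ?_, ?_, by ring⟩
  · linear_combination (u + k * v + 2 * w) * hw - hn
  · linear_combination 2 * hw

private lemma L1 (k u v : ℤ) (hk : 1 < k) (hu : 0 < u) (hv : 0 < v)
    (hn : u ^ 2 - (k ^ 2 + 4) * v ^ 2 = 4) : k ≤ v := by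
  obtain ⟨u₁, v₁, hu₁, hv₁, hn₁, h2u, h2v⟩ := descent k u v 4 hk hu hv hn (Or.inl rfl)
  have hv₁sq : 1 ≤ v₁ ^ 2 := by nlinarith
  have h3 : 0 ≤ (k ^ 2 + 4) * (v₁ ^ 2 - 1) := mul_nonneg (by positivity) (by linarith)
  have hk2 : k ^ 2 ≤ u₁ ^ 2 := by linarith
  have hku : k ≤ u₁ := sq_le_imp k u₁ hu₁.le hk2
  have h4 : k * 1 ≤ k * v₁ := mul_le_mul_of_nonneg_left hv₁ (by linarith)
  linarith

private lemma L2 (k u v : ℤ) (hk : 1 < k) (hu : 0 < u) (hv : 0 < v)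
    (hn : u ^ 2 - (k ^ 2 + 4) * v ^ 2 = 4) (hgt : k < v) : k ^ 3 + 2 * k ≤ v := by
  obtain ⟨u₁, v₁, hu₁, hv₁, hn₁, h2u, h2v⟩ := descent k u v 4 hk hu hv hn (Or.inl rfl)
  by_cases h1 : v₁ = 1
  · exfalso
    subst h1
    have he1 : u₁ = k := sq_eq_imp u₁ k hu₁.le (by linarith) (by linarith)
    omega
  · have hv₁2 : 2 ≤ v₁ := by omega
    obtain ⟨u₂, v₂, hu₂, hv₂, hn₂, h2u₁, h2v₁⟩ :=
      descent k u₁ v₁ (-4) hk hu₁ hv₁ hn₁ (Or.inr ⟨rfl, hv₁2⟩)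
    norm_num at hn₂
    have hkv₂ : k ≤ v₂ := L1 k u₂ v₂ hk hu₂ hv₂ hn₂
    -- u₂ ≥ k² + 2
    have hs1 : k ^ 2 ≤ v₂ ^ 2 := sqb k v₂ (by linarith) hkv₂
    have hs1' : (k ^ 2 + 4) * k ^ 2 ≤ (k ^ 2 + 4) * v₂ ^ 2 :=
      mul_le_mul_of_nonneg_left hs1 (by positivity)
    have hu₂sq : (k ^ 2 + 2) ^ 2 ≤ u₂ ^ 2 := by linarith
    have hu₂b : k ^ 2 + 2 ≤ u₂ := sq_le_imp _ _ hu₂.le hu₂sq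
    -- v₁ ≥ k² + 1
    have hm1 : k * k ≤ k * v₂ := mul_le_mul_of_nonneg_left hkv₂ (by linarith)
    have hv₁b : k ^ 2 + 1 ≤ v₁ := by linarith
    -- u₁ ≥ k³ + 3k
    have hs2 : (k ^ 2 + 1) ^ 2 ≤ v₁ ^ 2 := sqb _ _ (by positivity) hv₁b
    have hs2' : (k ^ 2 + 4) * (k ^ 2 + 1) ^ 2 ≤ (k ^ 2 + 4) * v₁ ^ 2 :=
      mul_le_mul_of_nonneg_left hs2 (by positivity)
    have hu₁sq : (k ^ 3 + 3 * k) ^ 2 ≤ u₁ ^ 2 := by linarith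
    have hu₁b : k ^ 3 + 3 * k ≤ u₁ := sq_le_imp _ _ hu₁.le hu₁sq
    have hm2 : k * (k ^ 2 + 1) ≤ k * v₁ := mul_le_mul_of_nonneg_left hv₁b (by linarith)
    linarith

private lemma L3 (k u v : ℤ) (hk : 1 < k) (hodd : Odd k) (hu : 0 < u) (hv : 0 < v)
    (hev : Even v) (hn : u ^ 2 - (k ^ 2 + 4) * v ^ 2 = 4) :
    k ^ 5 + 4 * k ^ 3 + 3 * k ≤ v := by
  obtain ⟨u₁, v₁, hu₁, hv₁, hn₁, h2u, h2v⟩ := descent k u v 4 hk hu hv hn (Or.inl rfl)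
  by_cases h1 : v₁ = 1
  · exfalso
    subst h1
    have he1 : u₁ = k := sq_eq_imp u₁ k hu₁.le (by linarith) (by linarith)
    have hveq : v = k := by omega
    rw [hveq] at hev
    exact (Int.not_odd_iff_even.mpr hev) hodd
  · have hv₁2 : 2 ≤ v₁ := by omega
    obtain ⟨u₂, v₂, hu₂, hv₂, hn₂, h2u₁, h2v₁⟩ :=
      descent k u₁ v₁ (-4) hk hu₁ hv₁ hn₁ (Or.inr ⟨rfl, hv₁2⟩)
    norm_num at hn₂
    have hkv₂ : k ≤ v₂ := L1 k u₂ v₂ hk hu₂ hv₂ hn₂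
    rcases eq_or_lt_of_le hkv₂ with h2 | h2
    · exfalso
      rw [← h2] at hn₂ h2u₁ h2v₁
      have hu₂e : u₂ = k ^ 2 + 2 := by
        refine sq_eq_imp _ _ hu₂.le (by positivity) ?_
        linear_combination hn₂
      have hv₁e : v₁ = k ^ 2 + 1 := by
        rw [hu₂e] at h2v₁; linarith
      have hu₁e : u₁ = k ^ 3 + 3 * k := by
        rw [hu₂e] at h2u₁; linarith
      have hveq : v = k ^ 3 + 2 * k := by
        rw [hu₁e, hv₁e] at h2v; linarith
      obtain ⟨t, ht⟩ := hev
      have hk3 : Even (k ^ 3) := ⟨t - k, by omega⟩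
      rw [Int.even_pow] at hk3
      exact (Int.not_odd_iff_even.mpr hk3.1) hodd
    · have hkv₂' : k ^ 3 + 2 * k ≤ v₂ := L2 k u₂ v₂ hk hu₂ hv₂ hn₂ h2
      -- u₂ ≥ k⁴ + 4k² + 2
      have hs1 : (k ^ 3 + 2 * k) ^ 2 ≤ v₂ ^ 2 := sqb _ _ (by positivity) hkv₂'
      have hs1' : (k ^ 2 + 4) * (k ^ 3 + 2 * k) ^ 2 ≤ (k ^ 2 + 4) * v₂ ^ 2 :=
        mul_le_mul_of_nonneg_left hs1 (by positivity)
      have hu₂sq : (k ^ 4 + 4 * k ^ 2 + 2) ^ 2 ≤ u₂ ^ 2 := by linarith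
      have hu₂b : k ^ 4 + 4 * k ^ 2 + 2 ≤ u₂ := sq_le_imp _ _ hu₂.le hu₂sq
      -- v₁ ≥ k⁴ + 3k² + 1
      have hm1 : k * (k ^ 3 + 2 * k) ≤ k * v₂ := mul_le_mul_of_nonneg_left hkv₂' (by linarith)
      have hv₁b : k ^ 4 + 3 * k ^ 2 + 1 ≤ v₁ := by linarith
      -- u₁ ≥ k⁵ + 5k³ + 5k
      have hs2 : (k ^ 4 + 3 * k ^ 2 + 1) ^ 2 ≤ v₁ ^ 2 := sqb _ _ (by positivity) hv₁b
      have hs2' : (k ^ 2 + 4) * (k ^ 4 + 3 * k ^ 2 + 1) ^ 2 ≤ (k ^ 2 + 4) * v₁ ^ 2 :=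
        mul_le_mul_of_nonneg_left hs2 (by positivity)
      have hu₁sq : (k ^ 5 + 5 * k ^ 3 + 5 * k) ^ 2 ≤ u₁ ^ 2 := by linarith
      have hu₁b : k ^ 5 + 5 * k ^ 3 + 5 * k ≤ u₁ := sq_le_imp _ _ hu₁.le hu₁sq
      have hm2 : k * (k ^ 4 + 3 * k ^ 2 + 1) ≤ k * v₁ := mul_le_mul_of_nonneg_left hv₁b (by linarith)
      linarith

theorem fundamental_solution_one_k_sq_add_four (k : ℤ) (hk : 1 < k) :
    (Even k → ∀ x₁ y₁ : ℤ, 2 * x₁ = k ^ 2 + 2 → 2 * y₁ = k →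
      IsFundamentalSolution (k ^ 2 + 4) 1 x₁ y₁) ∧
    (Odd k → ∀ x₁ y₁ : ℤ, 2 * x₁ = (k ^ 3 + 3 * k) ^ 2 + 2 →
      2 * y₁ = (k ^ 3 + 3 * k) * (k ^ 2 + 1) →
      IsFundamentalSolution (k ^ 2 + 4) 1 x₁ y₁) := by
  constructor
  · intro _ x₁ y₁ hx hy
    have hx₁ : 0 < x₁ := by nlinarith
    have hy₁ : 0 < y₁ := by linarith
    have hsol : x₁ ^ 2 - (k ^ 2 + 4) * y₁ ^ 2 = 1 := by
      have h4 : 4 * (x₁ ^ 2 - (k ^ 2 + 4) * y₁ ^ 2) = 4 := by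
        linear_combination (2 * x₁ + k ^ 2 + 2) * hx - (k ^ 2 + 4) * (2 * y₁ + k) * hy
      linarith
    refine ⟨hx₁, hy₁, hsol, ?_⟩
    intro x y hxp hyp hxy hne
    have h4 : (2 * x) ^ 2 - (k ^ 2 + 4) * (2 * y) ^ 2 = 4 := by linear_combination 4 * hxy
    have hL : k ≤ 2 * y := L1 k (2 * x) (2 * y) hk (by linarith) (by linarith) h4
    have hyy : y₁ ≤ y := by linarith
    rcases lt_or_eq_of_le hyy with h | h
    · have hy2 : y₁ ^ 2 < y ^ 2 := by nlinarith
      have hmul : (k ^ 2 + 4) * y₁ ^ 2 < (k ^ 2 + 4) * y ^ 2 :=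
        mul_lt_mul_of_pos_left hy2 (by positivity)
      have hx2 : x₁ ^ 2 < x ^ 2 := by linarith
      exact ⟨sq_lt_imp x₁ x hx₁.le hxp.le hx2, h⟩
    · exfalso
      have hxe : x ^ 2 = x₁ ^ 2 := by rw [← h] at hxy; linarith
      have hxe' : x = x₁ := sq_eq_imp x x₁ hxp.le hx₁.le hxe
      exact hne (by rw [hxe', h])
  · intro hodd x₁ y₁ hx hy
    have hkpos : (0:ℤ) < k := by linarith
    have hy' : 2 * y₁ = k ^ 5 + 4 * k ^ 3 + 3 * k := by linear_combination hy
    have hy₁ : 0 < y₁ := by nlinarith [pow_pos hkpos 5, pow_pos hkpos 3]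
    have hx₁ : 0 < x₁ := by nlinarith [sq_nonneg (k ^ 3 + 3 * k)]
    have hsol : x₁ ^ 2 - (k ^ 2 + 4) * y₁ ^ 2 = 1 := by
      have h4 : 4 * (x₁ ^ 2 - (k ^ 2 + 4) * y₁ ^ 2) = 4 := by
        linear_combination (2 * x₁ + (k ^ 3 + 3 * k) ^ 2 + 2) * hx
          - (k ^ 2 + 4) * (2 * y₁ + (k ^ 3 + 3 * k) * (k ^ 2 + 1)) * hy
      linarith
    refine ⟨hx₁, hy₁, hsol, ?_⟩
    intro x y hxp hyp hxy hne
    have h4 : (2 * x) ^ 2 - (k ^ 2 + 4) * (2 * y) ^ 2 = 4 := by linear_combination 4 * hxy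
    have hL : k ^ 5 + 4 * k ^ 3 + 3 * k ≤ 2 * y :=
      L3 k (2 * x) (2 * y) hk hodd (by linarith) (by linarith) ⟨y, by ring⟩ h4
    have hyy : y₁ ≤ y := by linarith
    rcases lt_or_eq_of_le hyy with h | h
    · have hy2 : y₁ ^ 2 < y ^ 2 := by nlinarith
      have hmul : (k ^ 2 + 4) * y₁ ^ 2 < (k ^ 2 + 4) * y ^ 2 :=
        mul_lt_mul_of_pos_left hy2 (by positivity)
      have hx2 : x₁ ^ 2 < x ^ 2 := by linarith
      exact ⟨sq_lt_imp x₁ x hx₁.le hxp.le hx2, h⟩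
    · exfalso
      have hxe : x ^ 2 = x₁ ^ 2 := by rw [← h] at hxy; linarith
      have hxe' : x = x₁ := sq_eq_imp x x₁ hxp.le hx₁.le hxe
      exact hne (by rw [hxe', h])
end

section
/- Let k > 3 be an integer. Then the Pell equation x² − (k² − 4)·y² = −1 has no integer solutions. -/
lemma pell_aux_lb (m X Y : ℤ) (hm : 2 ≤ m) (hXnn : 0 ≤ X) (hY1 : 1 ≤ Y)
    (hXY : X ^ 2 - ((2*m+1) ^ 2 - 4) * Y ^ 2 = -1) : 2*m*Y < X := by
  have hY2 : 1 ≤ Y^2 := by nlinarith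
  have hmY : 0 ≤ 2*m*Y := mul_nonneg (by linarith) (by linarith)
  nlinarith [hXY, hY2, hmY, hXnn,
    mul_nonneg (by linarith : (0:ℤ) ≤ m - 2) (sq_nonneg Y)]

lemma pell_aux_final (m X Y : ℤ) (hm : 2 ≤ m) (hXnn : 0 ≤ X) (hY1 : 1 ≤ Y)
    (hXY : X ^ 2 - ((2*m+1) ^ 2 - 4) * Y ^ 2 = -1)
    (hub : 2 * (4*m^3+6*m^2-2) * Y^2 ≤ (2*m^2+2*m)^2) : False := by
  have hkx : X < (2*m+1) * Y := by
    nlinarith [hXY, hXnn, sq_nonneg Y,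
      mul_nonneg (by linarith : (0:ℤ) ≤ 2*m+1) (by linarith : (0:ℤ) ≤ Y)]
  have hprod : ((2*m+1)*Y - X) * ((2*m+1)*Y + X) = 4*Y^2 + 1 := by
    linear_combination -hXY
  have hsum : (2*m+1)*Y + X ≤ 4*Y^2 + 1 := by
    nlinarith [hprod, hkx, hXnn]
  have hXlb : 2*m*Y < X := pell_aux_lb m X Y hm hXnn hY1 hXY
  have h4y : (4*m+1) * Y ≤ 4 * Y^2 := by linarith
  have hYlb : m + 1 ≤ Y := by
    have h6 : (4*m+1) * Y ≤ (4*Y) * Y := by linarith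
    have h7 : 4*m+1 ≤ 4*Y := le_of_mul_le_mul_right h6 (by omega)
    omega
  have hY2lb : (m+1)^2 ≤ Y^2 := by nlinarith
  have h5 : (8*m^3+12*m^2-4) * (m+1)^2 ≤ (8*m^3+12*m^2-4) * Y^2 := by
    apply mul_le_mul_of_nonneg_left hY2lb
    nlinarith
  have hm3 : 8 ≤ m^3 := by
    nlinarith [hm, mul_nonneg (by linarith : (0:ℤ) ≤ m - 2) (sq_nonneg m),
      mul_nonneg (by linarith : (0:ℤ) ≤ m - 2) (by linarith : (0:ℤ) ≤ m)]
  have hP : 0 < (m+1)^2 * (8*m^3+8*m^2-4) := by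
    apply mul_pos (by positivity)
    nlinarith [hm3, sq_nonneg m]
  nlinarith [h5, hub, hP]

lemma pell_aux_pos (m X Y : ℤ) (hm : 2 ≤ m) (hXnn : 0 ≤ X) (hY1 : 1 ≤ Y)
    (hXY : X ^ 2 - ((2*m+1) ^ 2 - 4) * Y ^ 2 = -1) :
    0 < (4*m^3+6*m^2-1) * Y - (2*m^2+2*m) * X := by
  have hsq : ((2*m^2+2*m)*X)^2 + Y^2 + (2*m^2+2*m)^2 = ((4*m^3+6*m^2-1)*Y)^2 := by
    linear_combination (2*m^2+2*m)^2 * hXY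
  have hBXnn : 0 ≤ (2*m^2+2*m) * X := by positivity
  have hAYpos : 0 < (4*m^3+6*m^2-1) * Y := by
    apply mul_pos (by nlinarith) (by omega)
  nlinarith [hsq, hBXnn, hAYpos, sq_nonneg (2*m^2+2*m), hY1]

lemma pell_aux_ub (m X Y : ℤ) (hm : 2 ≤ m) (hXnn : 0 ≤ X) (hY1 : 1 ≤ Y)
    (hXY : X ^ 2 - ((2*m+1) ^ 2 - 4) * Y ^ 2 = -1)
    (hlt : Y ≤ (4*m^3+6*m^2-1) * Y - (2*m^2+2*m) * X) :
    2 * (4*m^3+6*m^2-2) * Y^2 ≤ (2*m^2+2*m)^2 := by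
  have hge : (2*m^2+2*m) * X ≤ (4*m^3+6*m^2-2) * Y := by linarith
  have hBXnn : 0 ≤ (2*m^2+2*m) * X := by positivity
  have hstep : ((2*m^2+2*m)*X)^2 ≤ ((4*m^3+6*m^2-2)*Y)^2 := by
    nlinarith [hge, hBXnn]
  have hBX2 : ((2*m^2+2*m)*X)^2
      = ((2*m+1)^2 - 4) * (2*m^2+2*m)^2 * Y^2 - (2*m^2+2*m)^2 := by
    linear_combination (2*m^2+2*m)^2 * hXY
  nlinarith [hstep, hBX2]

set_option maxHeartbeats 1000000 in
lemma pell_key (m : ℤ) (hm : 2 ≤ m) :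
    ∀ n : ℕ, ∀ x y : ℤ, y.natAbs = n →
      x ^ 2 - ((2*m+1) ^ 2 - 4) * y ^ 2 = -1 → False := by
  intro n
  induction n using Nat.strong_induction_on with
  | _ n ih =>
    intro x y hyn h
    obtain ⟨X, Y, hXnn, hYnn, hYn, hXY⟩ :
        ∃ X Y : ℤ, 0 ≤ X ∧ 0 ≤ Y ∧ Y.natAbs = n ∧
          X ^ 2 - ((2*m+1) ^ 2 - 4) * Y ^ 2 = -1 := by
      refine ⟨(x.natAbs : ℤ), (y.natAbs : ℤ), Int.natCast_nonneg _, Int.natCast_nonneg _,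
        by rwa [Int.natAbs_natCast], ?_⟩
      rw [Int.natCast_natAbs, Int.natCast_natAbs, sq_abs, sq_abs]
      exact h
    clear h hyn x y
    have hY1 : 1 ≤ Y := by
      rcases hYnn.lt_or_eq with h' | h'
      · omega
      · exfalso; rw [← h'] at hXY; nlinarith [sq_nonneg X]
    have h' : ((4*m^3+6*m^2-1) * X - ((2*m+1)^2 - 4) * (2*m^2+2*m) * Y) ^ 2
        - ((2*m+1) ^ 2 - 4) * ((4*m^3+6*m^2-1) * Y - (2*m^2+2*m) * X) ^ 2 = -1 := by
      linear_combination hXY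
    have hy'pos := pell_aux_pos m X Y hm hXnn hY1 hXY
    by_cases hlt : (4*m^3+6*m^2-1) * Y - (2*m^2+2*m) * X < Y
    · have hn : ((4*m^3+6*m^2-1) * Y - (2*m^2+2*m) * X).natAbs < n := by
        have h1 := Int.natAbs_lt_natAbs_of_nonneg_of_lt hy'pos.le hlt
        rwa [hYn] at h1
      exact ih _ hn _ _ rfl h'
    · push_neg at hlt
      exact pell_aux_final m X Y hm hXnn hY1 hXY
        (pell_aux_ub m X Y hm hXnn hY1 hXY hlt)

theorem no_integer_solution_neg_one_k_sq_sub_four (k : ℤ) (hk : 3 < k) :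
    ¬∃ x y : ℤ, x ^ 2 - (k ^ 2 - 4) * y ^ 2 = -1 := by
  rintro ⟨x, y, h⟩
  rcases Int.even_or_odd k with ⟨m, hm⟩ | ⟨m, hm⟩
  · -- even case: mod 4
    subst hm
    have h4 : x^2 + 1 = 4 * ((m^2 - 1) * y^2) := by linear_combination h
    rcases Int.even_or_odd x with ⟨a, ha⟩ | ⟨a, ha⟩
    · subst ha
      have : 4 * (a^2) + 1 = 4 * ((m^2-1)*y^2) := by linear_combination h4
      omega
    · subst ha
      have : 4 * (a^2 + a) + 2 = 4 * ((m^2-1)*y^2) := by linear_combination h4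
      omega
  · subst hm
    have hm2 : 2 ≤ m := by omega
    exact pell_key m hm2 y.natAbs x y rfl h
end

section
/- Let k > 1 and let d = k² + 4. If k is even, then the positive integer solutions of the Pell equation x² − d·y² = 1 are exactly the pairs (x, y) = (V_{2n}(k,1)/2, U_{2n}(k,1)/2) for n ≥ 1. If k is odd, then the positive integer solutions of x² − d·y² = 1 are exactly the pairs (x, y) = (V_{6n}(k,1)/2, U_{6n}(k,1)/2) for n ≥ 1. -/
/-- Generalized Fibonacci sequence: `U 0 = 0`, `U 1 = 1`, `U (n+2) = k * U (n+1) + s * U n`. -/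
def genFib (k s : ℤ) : ℕ → ℤ
  | 0 => 0
  | 1 => 1
  | n + 2 => k * genFib k s (n + 1) + s * genFib k s n

/-- Generalized Lucas sequence: `V 0 = 2`, `V 1 = k`, `V (n+2) = k * V (n+1) + s * V n`. -/
def genLucas (k s : ℤ) : ℕ → ℤ
  | 0 => 2
  | 1 => k
  | n + 2 => k * genLucas k s (n + 1) + s * genLucas k s n

private lemma genFib_rec (k : ℤ) (n : ℕ) :
    genFib k 1 (n+2) = k * genFib k 1 (n+1) + genFib k 1 n := by
  simp [genFib]

private lemma genLucas_rec (k : ℤ) (n : ℕ) :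
    genLucas k 1 (n+2) = k * genLucas k 1 (n+1) + genLucas k 1 n := by
  simp [genLucas]

private lemma step_id (k : ℤ) : ∀ n : ℕ,
    2 * genLucas k 1 (n+1) = k * genLucas k 1 n + (k^2+4) * genFib k 1 n ∧
    2 * genFib k 1 (n+1) = genLucas k 1 n + k * genFib k 1 n := by
  intro n
  induction n with
  | zero => refine ⟨?_, ?_⟩ <;> simp [genFib, genLucas] <;> ring
  | succ n ih =>
    obtain ⟨h1, h2⟩ := ih
    refine ⟨?_, ?_⟩
    · have h4 : 2*(2 * genLucas k 1 (n+2)) =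
          2*(k * genLucas k 1 (n+1) + (k^2+4) * genFib k 1 (n+1)) := by
        rw [genLucas_rec]
        linear_combination k * h1 - (k^2+4) * h2
      linarith
    · have h4 : 2*(2 * genFib k 1 (n+2)) =
          2*(genLucas k 1 (n+1) + k * genFib k 1 (n+1)) := by
        rw [genFib_rec]
        linear_combination k * h2 - h1
      linarith

private lemma norm_step (k : ℤ) (n : ℕ) :
    genLucas k 1 (n+1)^2 - (k^2+4) * genFib k 1 (n+1)^2
      = -(genLucas k 1 n^2 - (k^2+4) * genFib k 1 n^2) := by
  obtain ⟨h1, h2⟩ := step_id k n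
  have h4 : 4*(genLucas k 1 (n+1)^2 - (k^2+4) * genFib k 1 (n+1)^2)
      = 4*(-(genLucas k 1 n^2 - (k^2+4) * genFib k 1 n^2)) := by
    linear_combination (2*genLucas k 1 (n+1) + k*genLucas k 1 n + (k^2+4)*genFib k 1 n) * h1
      - (k^2+4)*(2*genFib k 1 (n+1) + genLucas k 1 n + k*genFib k 1 n) * h2
  linarith

private lemma normAux (k : ℤ) : ∀ n : ℕ,
    (genLucas k 1 n^2 - (k^2+4) * genFib k 1 n^2 = 4 ∧ Even n) ∨
    (genLucas k 1 n^2 - (k^2+4) * genFib k 1 n^2 = -4 ∧ ¬ Even n) := by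
  intro n
  induction n with
  | zero => exact Or.inl ⟨by simp [genFib, genLucas], Even.zero⟩
  | succ n ih =>
    have hs := norm_step k n
    rcases ih with ⟨h, he⟩ | ⟨h, he⟩
    · right; rw [hs, h]; exact ⟨by ring, by simp [Nat.even_add_one, he]⟩
    · left; rw [hs, h]; exact ⟨by ring, by simp [Nat.even_add_one, he]⟩

private lemma base_case (k : ℤ) (A : ℤ) (hA : 0 < A)
    (h : A^2 - (k^2+4)*0^2 = 4 ∨ A^2 - (k^2+4)*0^2 = -4) :
    ∃ n : ℕ, A = genLucas k 1 n ∧ (0:ℤ) = genFib k 1 n := by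
  rcases h with h | h
  · have hA2 : A = 2 := by nlinarith [sq_nonneg (A - 2), sq_nonneg (A + 2)]
    exact ⟨0, by simp [genLucas, hA2], by simp [genFib]⟩
  · exfalso; nlinarith [sq_nonneg A]

private lemma descent_s5 (k : ℤ) (hk : 1 < k) : ∀ N : ℕ, ∀ A B : ℤ, 0 < A → 0 ≤ B → B ≤ (N:ℤ) →
    (A^2 - (k^2+4)*B^2 = 4 ∨ A^2 - (k^2+4)*B^2 = -4) →
    ∃ n : ℕ, A = genLucas k 1 n ∧ B = genFib k 1 n := by
  intro N
  induction N with
  | zero =>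
    intro A B hA hB hBN h
    have hB0 : B = 0 := by exact_mod_cast le_antisymm hBN hB
    subst hB0; exact base_case k A hA h
  | succ N IH =>
    intro A B hA hB hBN h
    rcases eq_or_lt_of_le hB with hB0 | hBpos
    · subst hB0; exact base_case k A hA h
    · -- descent step
      obtain ⟨s, hs, heq⟩ : ∃ s : ℤ, (s = 4 ∨ s = -4) ∧ A^2 - (k^2+4)*B^2 = s := by
        rcases h with h | h
        exacts [⟨4, Or.inl rfl, h⟩, ⟨-4, Or.inr rfl, h⟩]
      have hsle : s ≤ 4 := by rcases hs with rfl | rfl <;> norm_num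
      have hsge : -4 ≤ s := by rcases hs with rfl | rfl <;> norm_num
      have hB1 : 1 ≤ B := hBpos
      have hk2 : 2 ≤ k := hk
      -- lower bound: k*B ≤ A
      have hlow : k*B ≤ A := by
        by_contra hc
        push_neg at hc
        have h1 : A^2 < (k*B)^2 := by nlinarith
        nlinarith [sq_nonneg (B-1)]
      -- upper bound: A < (k+2)*B
      have hup : A < (k+2)*B := by
        by_contra hc
        push_neg at hc
        have h1 : ((k+2)*B)^2 ≤ A^2 := by
          have := mul_le_mul hc hc (by positivity) hA.le
          nlinarith
        nlinarith [sq_nonneg (B-1)]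
      -- parity
      have hprod : (A - k*B) * (A + k*B) = 4*B^2 + s := by linear_combination heq
      have hpar : Even (A - k*B) := by
        rcases Int.even_or_odd (A - k*B) with he | ho
        · exact he
        · exfalso
          have ho2 : Odd (A + k*B) := by
            obtain ⟨c, hc⟩ := ho
            exact ⟨c + k*B, by linarith⟩
          have hoprod : Odd ((A - k*B) * (A + k*B)) := ho.mul ho2
          rw [hprod] at hoprod
          obtain ⟨c, hc⟩ := hoprod
          rcases hs with rfl | rfl <;> omega
      obtain ⟨B', hB'⟩ : ∃ B', A - k*B = 2*B' := by
        obtain ⟨c, hc⟩ := hpar; exact ⟨c, by linarith⟩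
      set A' : ℤ := 2*B - k*B' with hA'def
      have hA2 : (k^2+4)*B - k*A = 2*A' := by rw [hA'def]; linear_combination -k * hB'
      have hB'0 : 0 ≤ B' := by linarith
      have hB'lt : B' < B := by linarith
      have hA'pos : 0 < A' := by
        have h1 : (k*A)^2 < ((k^2+4)*B)^2 := by
          nlinarith [sq_nonneg (B-1), sq_nonneg A, sq_nonneg (B*A)]
        have h2 : k*A < (k^2+4)*B := by
          by_contra hc
          push_neg at hc
          nlinarith
        linarith
      have hnew : A'^2 - (k^2+4)*B'^2 = -s := by
        have h4 : 4*(A'^2 - (k^2+4)*B'^2) = 4*(-s) := by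
          linear_combination (-((k^2+4)*B - k*A + 2*A')) * hA2
            + (k^2+4)*(A - k*B + 2*B') * hB' - 4*heq
        linarith
      have hBN' : B' ≤ (N:ℤ) := by
        have : B ≤ (N:ℤ) + 1 := by push_cast at hBN; linarith
        linarith
      have hnew' : A'^2 - (k^2+4)*B'^2 = 4 ∨ A'^2 - (k^2+4)*B'^2 = -4 := by
        rcases hs with rfl | rfl
        · exact Or.inr hnew
        · exact Or.inl (by rw [hnew]; norm_num)
      obtain ⟨n, hAn, hBn⟩ := IH A' B' hA'pos hB'0 hBN' hnew'
      obtain ⟨s1, s2⟩ := step_id k n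
      rw [← hAn, ← hBn] at s1 s2
      refine ⟨n+1, ?_, ?_⟩
      · have h2A : 2*(2*A) = 2*(k*A' + (k^2+4)*B') := by
          linear_combination k*hA2 + (k^2+4)*hB'
        linarith
      · have h2B : 2*(2*B) = 2*(A' + k*B') := by
          linear_combination hA2 + k*hB'
        linarith

private lemma u_odd_parity (k : ℤ) (hko : k % 2 = 1) : ∀ n : ℕ,
    genFib k 1 (3*n) % 2 = 0 ∧ genFib k 1 (3*n+1) % 2 = 1 ∧ genFib k 1 (3*n+2) % 2 = 1 := by
  intro n
  induction n with
  | zero =>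
    refine ⟨by simp [genFib], by simp [genFib], ?_⟩
    have : genFib k 1 2 = k := by simp [genFib]
    rw [show 3*0+2 = 2 from rfl, this]; exact hko
  | succ n ih =>
    obtain ⟨i0, i1, i2⟩ := ih
    have e0 : genFib k 1 (3*n+3) = k * genFib k 1 (3*n+2) + genFib k 1 (3*n+1) := by
      rw [show 3*n+3 = (3*n+1)+2 from by omega, genFib_rec]
    have m2 := Int.mul_emod k (genFib k 1 (3*n+2)) 2
    rw [hko, i2] at m2
    have p0 : genFib k 1 (3*n+3) % 2 = 0 := by omega
    have e1 : genFib k 1 (3*n+4) = k * genFib k 1 (3*n+3) + genFib k 1 (3*n+2) := by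
      rw [show 3*n+4 = (3*n+2)+2 from by omega, genFib_rec]
    have m3 := Int.mul_emod k (genFib k 1 (3*n+3)) 2
    rw [hko, p0] at m3
    have p1 : genFib k 1 (3*n+4) % 2 = 1 := by omega
    have e2 : genFib k 1 (3*n+5) = k * genFib k 1 (3*n+4) + genFib k 1 (3*n+3) := by
      rw [show 3*n+5 = (3*n+3)+2 from by omega, genFib_rec]
    have m4 := Int.mul_emod k (genFib k 1 (3*n+4)) 2
    rw [hko, p1] at m4
    have p2 : genFib k 1 (3*n+5) % 2 = 1 := by omega
    refine ⟨?_, ?_, ?_⟩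
    · rw [show 3*(n+1) = 3*n+3 from by omega]; exact p0
    · rw [show 3*(n+1)+1 = 3*n+4 from by omega]; exact p1
    · rw [show 3*(n+1)+2 = 3*n+5 from by omega]; exact p2

theorem solutions_one_k_sq_add_four (k : ℤ) (hk : 1 < k) :
    (Even k → ∀ x y : ℤ, 0 < x → 0 < y →
      (x ^ 2 - (k ^ 2 + 4) * y ^ 2 = 1 ↔
        ∃ n : ℕ, 1 ≤ n ∧ 2 * x = genLucas k 1 (2 * n) ∧ 2 * y = genFib k 1 (2 * n))) ∧
    (Odd k → ∀ x y : ℤ, 0 < x → 0 < y →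
      (x ^ 2 - (k ^ 2 + 4) * y ^ 2 = 1 ↔
        ∃ n : ℕ, 1 ≤ n ∧ 2 * x = genLucas k 1 (6 * n) ∧ 2 * y = genFib k 1 (6 * n))) := by
  constructor
  · intro _ x y hx hy
    constructor
    · intro heq
      have heq4 : (2*x)^2 - (k^2+4)*(2*y)^2 = 4 := by linear_combination 4*heq
      obtain ⟨m, hV, hU⟩ := descent_s5 k hk (2*y).toNat (2*x) (2*y)
        (by linarith) (by linarith) (Int.self_le_toNat _) (Or.inl heq4)
      have hm0 : m ≠ 0 := by
        rintro rfl
        simp [genFib] at hU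
        omega
      rcases normAux k m with ⟨hn, hev⟩ | ⟨hn, _⟩
      · obtain ⟨t, ht⟩ := hev
        refine ⟨t, by omega, ?_, ?_⟩
        · rw [show 2*t = m from by omega]; exact hV
        · rw [show 2*t = m from by omega]; exact hU
      · rw [← hV, ← hU] at hn
        linarith
    · rintro ⟨n, hn1, h1, h2⟩
      rcases normAux k (2*n) with ⟨hnorm, _⟩ | ⟨_, hev⟩
      · have h4 : 4*(x^2 - (k^2+4)*y^2) = 4*1 := by
          linear_combination (2*x + genLucas k 1 (2*n))*h1
            - (k^2+4)*(2*y + genFib k 1 (2*n))*h2 + hnorm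
        have : x^2 - (k^2+4)*y^2 = 1 := by linarith
        linear_combination this
      · exact absurd ⟨n, by ring⟩ hev
  · intro hke x y hx hy
    have hko : k % 2 = 1 := Int.odd_iff.mp hke
    constructor
    · intro heq
      have heq4 : (2*x)^2 - (k^2+4)*(2*y)^2 = 4 := by linear_combination 4*heq
      obtain ⟨m, hV, hU⟩ := descent_s5 k hk (2*y).toNat (2*x) (2*y)
        (by linarith) (by linarith) (Int.self_le_toNat _) (Or.inl heq4)
      have hm0 : m ≠ 0 := by
        rintro rfl
        simp [genFib] at hU
        omega
      rcases normAux k m with ⟨hn, hev⟩ | ⟨hn, _⟩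
      · have hUe : genFib k 1 m % 2 = 0 := by omega
        have h3 : 3 ∣ m := by
          have hmod : m % 3 = 0 ∨ m % 3 = 1 ∨ m % 3 = 2 := by omega
          rcases hmod with hr | hr | hr
          · omega
          · exfalso
            have := (u_odd_parity k hko (m/3)).2.1
            rw [show 3*(m/3)+1 = m from by omega] at this
            omega
          · exfalso
            have := (u_odd_parity k hko (m/3)).2.2
            rw [show 3*(m/3)+2 = m from by omega] at this
            omega
        obtain ⟨a, ha⟩ := hev
        obtain ⟨b, hb⟩ := h3
        have h6 : ∃ t, m = 6*t := by
          refine ⟨m/6, ?_⟩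
          omega
        obtain ⟨t, ht⟩ := h6
        refine ⟨t, by omega, ?_, ?_⟩
        · rw [← ht]; exact hV
        · rw [← ht]; exact hU
      · rw [← hV, ← hU] at hn
        linarith
    · rintro ⟨n, hn1, h1, h2⟩
      rcases normAux k (6*n) with ⟨hnorm, _⟩ | ⟨_, hev⟩
      · have h4 : 4*(x^2 - (k^2+4)*y^2) = 4*1 := by
          linear_combination (2*x + genLucas k 1 (6*n))*h1
            - (k^2+4)*(2*y + genFib k 1 (6*n))*h2 + hnorm
        have : x^2 - (k^2+4)*y^2 = 1 := by linarith
        linear_combination this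
      · exact absurd ⟨3*n, by ring⟩ hev
end

section
/- Let d be a positive integer that is not a perfect square, and let (a, b) be a positive integer solution of the equation x² − d·y² = 4. If a > b² − 2, then (a, b) is the fundamental solution of x² − d·y² = 4; that is, every other positive integer solution (x, y) satisfies a < x and b < y. -/
set_option maxHeartbeats 1000000 in
theorem fundamental_solution_four_of_gt (d a b : ℤ) (hd : 0 < d) (hns : ¬IsSquare d)
    (ha : 0 < a) (hb : 0 < b) (hab : a ^ 2 - d * b ^ 2 = 4) (h : b ^ 2 - 2 < a) :
    ∀ x y : ℤ, 0 < x → 0 < y → x ^ 2 - d * y ^ 2 = 4 → (x, y) ≠ (a, b) → a < x ∧ b < y := by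
  intro x y hx hy hxy hne
  by_cases hyb : b < y
  · refine ⟨?_, hyb⟩
    by_contra hax
    push_neg at hax
    have h1 : 0 < y ^ 2 - b ^ 2 := by
      nlinarith [mul_pos (show (0:ℤ) < y - b by linarith) (show (0:ℤ) < y + b by linarith)]
    nlinarith [mul_pos hd h1,
      mul_nonneg (show (0:ℤ) ≤ a - x by linarith) (show (0:ℤ) ≤ a + x by linarith)]
  push_neg at hyb
  exfalso
  rcases lt_or_eq_of_le hyb with hlt | heq
  · -- y < b : derive contradiction
    have hb2 : 2 ≤ b := by omega
    have ha1 : b ^ 2 - 1 ≤ a := by omega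
    have hb4 : 4 ≤ b ^ 2 := by nlinarith
    have hasq : (b ^ 2 - 1) * (b ^ 2 - 1) ≤ a * a :=
      mul_self_le_mul_self (by nlinarith) ha1
    have hd2 : b ^ 2 - 2 ≤ d := by nlinarith
    have hy1 : 1 ≤ y := hy
    have hy2 : 1 ≤ y ^ 2 := by nlinarith
    -- parity facts via ZMod 2
    have hzm : ∀ t : ZMod 2, t ^ 2 = t := by decide
    have h4 : (4 : ZMod 2) = 0 := by decide
    have cab : (a : ZMod 2) = (d : ZMod 2) * (b : ZMod 2) := by
      have := congrArg (fun n : ℤ => (n : ZMod 2)) hab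
      push_cast at this
      rw [hzm a, hzm b] at this
      linear_combination this + h4
    have cxy : (x : ZMod 2) = (d : ZMod 2) * (y : ZMod 2) := by
      have := congrArg (fun n : ℤ => (n : ZMod 2)) hxy
      push_cast at this
      rw [hzm x, hzm y] at this
      linear_combination this + h4
    obtain ⟨p, hp_def⟩ : ∃ p : ℤ, p = a * x - d * b * y := ⟨_, rfl⟩
    obtain ⟨q, hq_def⟩ : ∃ q : ℤ, q = b * x - a * y := ⟨_, rfl⟩
    have hpe : (2 : ℤ) ∣ p := by
      have hc : ((p : ℤ) : ZMod 2) = 0 := by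
        rw [hp_def]
        push_cast
        rw [cab, cxy]
        linear_combination (b : ZMod 2) * (y : ZMod 2) * hzm (d : ZMod 2)
      exact (ZMod.intCast_zmod_eq_zero_iff_dvd p 2).mp hc
    have hqe : (2 : ℤ) ∣ q := by
      have hc : ((q : ℤ) : ZMod 2) = 0 := by
        rw [hq_def]
        push_cast
        rw [cab, cxy]
        ring
      exact (ZMod.intCast_zmod_eq_zero_iff_dvd q 2).mp hc
    -- q > 0
    have hqsq : q * (b * x + a * y) = 4 * (b ^ 2 - y ^ 2) := by
      rw [hq_def]; linear_combination b ^ 2 * hxy - y ^ 2 * hab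
    have hbxay : 0 < b * x + a * y := by positivity
    have hq_pos : 0 < q := by
      have h1 : 0 < q * (b * x + a * y) := by
        rw [hqsq]
        nlinarith [mul_pos (show (0:ℤ) < b - y by linarith) (show (0:ℤ) < b + y by linarith)]
      by_contra hq
      push_neg at hq
      linarith [mul_nonneg (neg_nonneg.mpr hq) hbxay.le]
    have hq2 : 2 ≤ q := by
      rcases hqe with ⟨k, hk⟩; omega
    -- p > 0
    have hpsq : p * (a * x + d * b * y) = 16 + 4 * d * y ^ 2 + 4 * d * b ^ 2 := by
      rw [hp_def]; linear_combination x ^ 2 * hab + (d * b ^ 2 + 4) * hxy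
    have haxdby : 0 < a * x + d * b * y := by positivity
    have hp_pos : 0 < p := by
      have h1 : 0 < p * (a * x + d * b * y) := by
        rw [hpsq]
        nlinarith [mul_pos hd (pow_pos hy 2), mul_pos hd (pow_pos hb 2)]
      by_contra hp
      push_neg at hp
      linarith [mul_nonneg (neg_nonneg.mpr hp) haxdby.le]
    -- key norm identity
    have hkey : p ^ 2 - d * q ^ 2 = 16 := by
      rw [hp_def, hq_def]
      linear_combination (x ^ 2 - d * y ^ 2) * hab + 4 * hxy
    -- p ≥ 2b + 2
    have hq2sq : 4 ≤ q ^ 2 := by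
      rw [sq]
      exact le_trans (by norm_num)
        (mul_le_mul hq2 hq2 (by norm_num) (by linarith))
    have hdq : d * 4 ≤ d * q ^ 2 := mul_le_mul_of_nonneg_left hq2sq hd.le
    have hp2big : (2 * b) ^ 2 < p ^ 2 := by
      have e : (2 * b) ^ 2 = 4 * b ^ 2 := by ring
      linarith
    have hpb : 2 * b < p := lt_of_pow_lt_pow_left₀ 2 hp_pos.le hp2big
    have hpbig : 2 * b + 2 ≤ p := by
      rcases hpe with ⟨k, hk⟩; omega
    -- x ≥ b + 1
    have hdy : d * 1 ≤ d * y ^ 2 := mul_le_mul_of_nonneg_left hy2 hd.le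
    have hx2big : b ^ 2 < x ^ 2 := by linarith
    have hxbig : b + 1 ≤ x := lt_of_pow_lt_pow_left₀ 2 hx.le hx2big
    -- final identity and contradiction
    have hfin : x * q + y * p = 4 * b := by
      rw [hp_def, hq_def]; linear_combination b * hxy
    have h1 : x * 2 ≤ x * q := mul_le_mul_of_nonneg_left hq2 hx.le
    have h2 : 1 * p ≤ y * p := mul_le_mul_of_nonneg_right hy1 hp_pos.le
    linarith
  · -- y = b : then x = a, contradicting hne
    have hx2 : x ^ 2 = a ^ 2 := by rw [← heq] at hab; linarith
    have hxa : (x - a) * (x + a) = 0 := by linear_combination hx2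
    rcases mul_eq_zero.mp hxa with h0 | h0
    · exact hne (by rw [Prod.mk.injEq]; constructor <;> omega)
    · linarith
end

section
/- Let k > 3 be an integer. Then the equation x² − (k² − 4)·y² = −4 has no positive integer solutions. -/
theorem no_solution_neg_four_k_sq_sub_four (k : ℤ) (hk : 3 < k) :
    ¬∃ x y : ℤ, 0 < x ∧ 0 < y ∧ x ^ 2 - (k ^ 2 - 4) * y ^ 2 = -4 := by
  have key : ∀ n : ℕ, ∀ y x : ℤ, y.toNat = n → 0 < y → 0 < x →
      x ^ 2 - (k ^ 2 - 4) * y ^ 2 ≠ -4 := by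
    intro n
    induction n using Nat.strong_induction_on with
    | _ n ih =>
      intro y x hyn hy hx heq
      have hk4 : 4 ≤ k := hk
      have h1 : x < k * y := by
        by_contra hcon
        push_neg at hcon
        have hpos : (0:ℤ) < x + k * y := by nlinarith
        nlinarith [mul_nonneg (sub_nonneg.mpr hcon) hpos.le, mul_pos hy hy]
      have h2 : (k - 2) * y < x := by nlinarith [mul_pos hy hy]
      have hpar : (2 : ℤ) ∣ (k * y - x) := by
        rcases Int.even_or_odd (k * y - x) with h | h
        · exact h.two_dvd
        · exfalso
          have hodd : Odd (k * y + x) := by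
            rcases h with ⟨m, hm⟩
            exact ⟨m + x, by linarith⟩
          have hmul : Odd ((k * y - x) * (k * y + x)) := h.mul hodd
          have he : (k * y - x) * (k * y + x) = 4 * y ^ 2 + 4 := by nlinarith
          rw [he] at hmul
          rcases hmul with ⟨m, hm⟩
          omega
      obtain ⟨y', hy'⟩ := hpar
      have hx2 : x = k * y - 2 * y' := by linarith
      subst hx2
      have hy'pos : 0 < y' := by nlinarith
      have hy'lt : y' < y := by nlinarith
      have heq' : (2 * y - k * y') ^ 2 - (k ^ 2 - 4) * y' ^ 2 = -4 := by
        linear_combination heq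
      have ha0 : (2 * y - k * y') ≠ 0 := by
        intro h0
        rw [h0] at heq'
        nlinarith
      have hlt : y'.toNat < n := by omega
      exact ih y'.toNat hlt y' |2 * y - k * y'| rfl hy'pos
        (abs_pos.mpr ha0) (by rw [sq_abs]; exact heq')
  rintro ⟨x, y, hx, hy, h⟩
  exact key y.toNat y x rfl hy hx h
end

section
/- Let k ≥ 1 be an integer with k ≠ 2. Then the positive integer solutions of the equation x² − (k² + 1)·y² = −4 are exactly the pairs (x, y) = (V_{2n−1}(2k,1), 2·U_{2n−1}(2k,1)) for n ≥ 1. -/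
namespace SolNegFour

noncomputable abbrev U (k : ℤ) (m : ℕ) : ℤ := genFib (2*k) 1 m
noncomputable abbrev V (k : ℤ) (m : ℕ) : ℤ := genLucas (2*k) 1 m

lemma U_rec (k : ℤ) (m : ℕ) : U k (m+2) = 2*k * U k (m+1) + U k m := by
  simp [U, genFib]

lemma V_rec (k : ℤ) (m : ℕ) : V k (m+2) = 2*k * V k (m+1) + V k m := by
  simp [V, genLucas]

lemma UV_nonneg (k : ℤ) (hk : 1 ≤ k) :
    ∀ m, 0 ≤ U k m ∧ 1 ≤ U k (m+1) ∧ 0 ≤ V k m ∧ 0 ≤ V k (m+1) := by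
  intro m
  induction m with
  | zero =>
    refine ⟨le_refl 0, le_refl 1, by norm_num [V, genLucas], ?_⟩
    show (0:ℤ) ≤ genLucas (2*k) 1 1
    simp [genLucas]; linarith
  | succ n ih =>
    obtain ⟨h1, h2, h3, h4⟩ := ih
    refine ⟨by linarith, ?_, h4, ?_⟩
    · rw [U_rec]; nlinarith
    · rw [V_rec]; nlinarith

lemma VU (k : ℤ) : ∀ m, V k m = 2 * U k (m+1) - 2*k * U k m ∧
    V k (m+1) = 2 * U k (m+2) - 2*k * U k (m+1) := by
  intro m
  induction m with
  | zero =>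
    constructor
    · show genLucas (2*k) 1 0 = 2 * genFib (2*k) 1 1 - 2*k * genFib (2*k) 1 0
      simp [genFib, genLucas]
    · show genLucas (2*k) 1 1 = 2 * genFib (2*k) 1 2 - 2*k * genFib (2*k) 1 1
      simp [genFib, genLucas]; ring
  | succ n ih =>
    obtain ⟨h1, h2⟩ := ih
    refine ⟨h2, ?_⟩
    linear_combination V_rec k n + 2*k*h2 + h1 - 2*(U_rec k (n+1)) + 2*k*(U_rec k n)

lemma cassini (k : ℤ) : ∀ m, U k (m+1)^2 - 2*k*U k (m+1)*U k m - U k m^2 = (-1)^m := by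
  intro m
  induction m with
  | zero =>
    show genFib (2*k) 1 1 ^2 - 2*k*genFib (2*k) 1 1 * genFib (2*k) 1 0 - genFib (2*k) 1 0 ^2 = _
    simp [genFib]
  | succ n ih =>
    linear_combination (U k (n+2) + U k n) * (U_rec k n) - ih

lemma normId (k : ℤ) (m : ℕ) : (V k m)^2 - (k^2+1)*(2*U k m)^2 = 4*(-1)^m := by
  have hA := (VU k m).1
  have hB := cassini k m
  linear_combination (V k m + 2*U k (m+1) - 2*k*U k m) * hA + 4*hB

lemma stepU (k : ℤ) (m : ℕ) : 2 * U k (m+1) = V k m + 2*k*U k m := by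
  linear_combination -(VU k m).1

lemma stepV (k : ℤ) (m : ℕ) : V k (m+1) = k * V k m + 2*(k^2+1) * U k m := by
  linear_combination (VU k m).2 + 2*(U_rec k m) - k*(VU k m).1

set_option maxHeartbeats 2000000 in
lemma descent (k : ℤ) (hk : 1 ≤ k) (hk2 : k ≠ 2) :
    ∀ N : ℕ, ∀ x y : ℤ, 0 < x → 0 < y → y ≤ (N : ℤ) →
      ((x ^ 2 - (k ^ 2 + 1) * y ^ 2 = -4 →
        ∃ m : ℕ, m % 2 = 1 ∧ x = V k m ∧ y = 2 * U k m) ∧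
       (x ^ 2 - (k ^ 2 + 1) * y ^ 2 = 4 →
        ∃ m : ℕ, m % 2 = 0 ∧ 1 ≤ m ∧ x = V k m ∧ y = 2 * U k m)) := by
  intro N
  induction N with
  | zero => intro x y hx hy hyN; exfalso; omega
  | succ N IH =>
    intro x y hx hy hyN
    have hkpos : (0:ℤ) < k := by linarith
    have hkx : 0 < k*x := mul_pos hkpos hx
    have hdy : 0 < (k^2+1)*y := mul_pos (by positivity) hy
    have hky : 0 < k*y := mul_pos hkpos hy
    constructor
    · -- norm -4 case
      intro heq
      by_cases hy' : 0 < x - k * y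
      · -- descend: (x', y') = ((k²+1)y - kx, x - ky) solves the +4 equation
        have hscaled : k^2*x^2 - k^2*(k^2+1)*y^2 = -4*k^2 := by linear_combination k^2*heq
        have hx' : 0 < (k^2+1)*y - k*x := by
          rcases lt_or_ge 0 ((k^2+1)*y - k*x) with h | h
          · exact h
          · exfalso
            nlinarith [mul_nonneg (by linarith : (0:ℤ) ≤ k*x - (k^2+1)*y)
              (by linarith : (0:ℤ) ≤ k*x + (k^2+1)*y), mul_pos hdy hy,
              mul_pos hkpos hkpos]
        have heq' : ((k^2+1)*y - k*x)^2 - (k^2+1)*(x - k*y)^2 = 4 := by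
          linear_combination (-1 : ℤ) * heq
        have hlt : x - k*y < y := by
          rcases lt_or_ge x ((k+1)*y) with h | h
          · linarith
          · exfalso
            nlinarith [mul_nonneg (by linarith : (0:ℤ) ≤ x - (k+1)*y)
              (by linarith : (0:ℤ) ≤ x + (k+1)*y), mul_pos hkpos (mul_pos hy hy)]
        obtain ⟨m, hm0, hm1, hxm, hym⟩ :=
          (IH ((k^2+1)*y - k*x) (x - k*y) hx' hy' (by omega)).2 heq'
        refine ⟨m+1, by omega, ?_, ?_⟩
        · linear_combination (k:ℤ)*hxm + (k^2+1)*hym - stepV k m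
        · linear_combination hxm + k*hym - stepU k m
      · -- base cases y = 1, 2
        push_neg at hy'
        have hxky : x ≤ k*y := by linarith
        have hy2 : y ≤ 2 := by
          nlinarith [mul_self_le_mul_self (le_of_lt hx) hxky, mul_pos hy hy]
        interval_cases y
        · -- y = 1 : k² - x² = 3 forces k = 2, contradiction
          exfalso
          have h3 : (k - x)*(k + x) = 3 := by linear_combination -heq
          have hxk : x < k := by nlinarith
          have hge : 1 ≤ k - x := by omega
          have hge2 : 2 ≤ k + x := by omega
          have h1 : k - x = 1 := by
            by_contra hne
            have h2 : 2 ≤ k - x := by omega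
            nlinarith [mul_nonneg (by linarith : (0:ℤ) ≤ k - x - 2)
              (by linarith : (0:ℤ) ≤ k + x - 2)]
          have h4 : k + x = 3 := by linear_combination h3 - (k+x)*h1
          exact hk2 (by omega)
        · -- y = 2 : x = 2k, the fundamental solution
          have h3 : (x - 2*k)*(x + 2*k) = 0 := by linear_combination heq
          rcases mul_eq_zero.mp h3 with h | h
          · refine ⟨1, by norm_num, ?_, ?_⟩
            · show x = genLucas (2*k) 1 1
              simp [genLucas]; linarith
            · show (2:ℤ) = 2 * genFib (2*k) 1 1
              simp [genFib]
          · exfalso; linarith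
    · -- norm +4 case
      intro heq
      by_cases h24 : 4 < 2*k*y^2
      · have hy'pos : 0 < x - k*y := by
          rcases lt_or_ge (k*y) x with h | h
          · linarith
          · exfalso
            nlinarith [mul_self_le_mul_self (le_of_lt hx) h, mul_pos hy hy]
        have hy'lt : x - k*y < y := by
          rcases lt_or_ge x ((k+1)*y) with h | h
          · linarith
          · exfalso
            nlinarith [mul_nonneg (by linarith : (0:ℤ) ≤ x - (k+1)*y)
              (by linarith : (0:ℤ) ≤ x + (k+1)*y)]
        have heq' : ((k^2+1)*y - k*x)^2 - (k^2+1)*(x - k*y)^2 = -4 := by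
          linear_combination (-1 : ℤ) * heq
        rcases lt_trichotomy ((k^2+1)*y - k*x) 0 with hx' | hx' | hx'
        · -- x' < 0 : would give a solution below the fundamental one; impossible
          exfalso
          have heq'' : (-((k^2+1)*y - k*x))^2 - (k^2+1)*(x - k*y)^2 = -4 := by
            linear_combination heq'
          obtain ⟨m, hm, hxm, hym⟩ :=
            (IH (-((k^2+1)*y - k*x)) (x - k*y) (by linarith) hy'pos (by omega)).1 heq''
          obtain ⟨m', rfl⟩ : ∃ m', m = m' + 1 := ⟨m - 1, by omega⟩
          have hU1 : 1 ≤ U k (m'+1) := (UV_nonneg k hk m').2.1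
          have hV0 : 0 ≤ V k (m'+1) := (UV_nonneg k hk m').2.2.2
          have hodd : (-1:ℤ)^(m'+1) = -1 := Odd.neg_one_pow (by
            refine Nat.odd_iff.mpr hm)
          have hnorm := normId k (m'+1)
          rw [hodd] at hnorm
          -- y = -V + 2kU > 0, but V ≥ 2kU
          have hyy : y = -(V k (m'+1)) + k * (2 * U k (m'+1)) := by
            linear_combination -hxm + k*hym
          have hpos1 : 0 < 2*k*U k (m'+1) - V k (m'+1) := by linarith
          have hpos2 : 0 < 2*k*U k (m'+1) + V k (m'+1) := by nlinarith
          nlinarith [mul_pos hpos1 hpos2, sq_nonneg (U k (m'+1) - 1)]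
        · -- x' = 0 : impossible
          exfalso
          have h4 : (k^2+1)*(x - k*y)^2 = 4 := by
            linear_combination -heq' + ((k^2+1)*y - k*x)*hx'
          have hy'1 : 1 ≤ x - k*y := hy'pos
          have ht2 : x - k*y ≤ 1 := by
            by_contra hcon
            push_neg at hcon
            have h2t : 2 ≤ x - k*y := by omega
            nlinarith [mul_le_mul h2t h2t (by norm_num) (by linarith : (0:ℤ) ≤ x - k*y),
              mul_pos hkpos hkpos]
          have ht1 : x - k*y = 1 := by omega
          have hk3 : k^2 = 3 := by
            linear_combination h4 - (k^2+1)*((x - k*y)+1)*ht1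
          rcases lt_or_ge k 2 with h | h
          · have hk1 : k = 1 := by omega
            rw [hk1] at hk3
            norm_num at hk3
          · nlinarith [mul_le_mul h h (by norm_num) (by linarith : (0:ℤ) ≤ k)]
        · -- x' > 0 : descend to the -4 equation
          obtain ⟨m, hm, hxm, hym⟩ :=
            (IH ((k^2+1)*y - k*x) (x - k*y) hx' hy'pos (by omega)).1 heq'
          refine ⟨m+1, by omega, by omega, ?_, ?_⟩
          · linear_combination (k:ℤ)*hxm + (k^2+1)*hym - stepV k m
          · linear_combination hxm + k*hym - stepU k m
      · -- degenerate small case: k = 1, y = 1, x² = 6 impossible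
        exfalso
        push_neg at h24
        have hy1 : y = 1 := by nlinarith [mul_pos hy hy]
        subst hy1
        have hkle : k ≤ 2 := by nlinarith
        have hk1 : k = 1 := by omega
        subst hk1
        have hx6 : x^2 = 6 := by linarith
        have hxle : x ≤ 2 := by nlinarith
        interval_cases x <;> norm_num at hx6

end SolNegFour

theorem solutions_neg_four_k_sq_add_one (k : ℤ) (hk : 1 ≤ k) (hk2 : k ≠ 2)
    (x y : ℤ) (hx : 0 < x) (hy : 0 < y) :
    x ^ 2 - (k ^ 2 + 1) * y ^ 2 = -4 ↔
      ∃ n : ℕ, 1 ≤ n ∧ x = genLucas (2 * k) 1 (2 * n - 1) ∧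
        y = 2 * genFib (2 * k) 1 (2 * n - 1) := by
  constructor
  · intro heq
    obtain ⟨m, hm, hxm, hym⟩ :=
      (SolNegFour.descent k hk hk2 y.toNat x y hx hy (Int.self_le_toNat y)).1 heq
    refine ⟨(m+1)/2, by omega, ?_, ?_⟩
    · have h : 2*((m+1)/2) - 1 = m := by omega
      rw [h]; exact hxm
    · have h : 2*((m+1)/2) - 1 = m := by omega
      rw [h]; exact hym
  · rintro ⟨n, hn, rfl, rfl⟩
    have hnorm := SolNegFour.normId k (2*n - 1)
    have hodd : (-1:ℤ)^(2*n-1) = -1 := Odd.neg_one_pow ⟨n - 1, by omega⟩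
    rw [hodd] at hnorm
    linarith
end

section
/- Let k ≥ 1 be an integer with k ≠ 2. Then the positive integer solutions of the equation x² − (k² + 1)·y² = 4 are exactly the pairs (x, y) = (V_{2n}(2k,1), 2·U_{2n}(2k,1)) for n ≥ 1. -/
/-- Recurrence identities expressing index shift as multiplication by `k + √(k²+1)`. -/
lemma step_ab (k : ℤ) : ∀ n : ℕ,
    genLucas (2*k) 1 (n+1) = k * genLucas (2*k) 1 n + 2*(k^2+1) * genFib (2*k) 1 n ∧
    2 * genFib (2*k) 1 (n+1) = genLucas (2*k) 1 n + 2*k * genFib (2*k) 1 n := by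
  intro n
  induction n with
  | zero => simp [genFib, genLucas]; ring
  | succ n ih =>
    obtain ⟨ha, hb⟩ := ih
    constructor
    · show genLucas (2*k) 1 (n+2) = _
      simp only [genLucas, genFib]
      linear_combination k * ha - (k^2+1) * hb
    · show 2 * genFib (2*k) 1 (n+2) = _
      simp only [genLucas, genFib]
      linear_combination k * hb - ha

/-- The norm identity: `V_n² − (k²+1)(2U_n)² = 4(−1)ⁿ`. -/
lemma norm_id (k : ℤ) : ∀ n : ℕ,
    (genLucas (2*k) 1 n)^2 - (k^2+1) * (2 * genFib (2*k) 1 n)^2 = 4 * (-1)^n := by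
  intro n
  induction n with
  | zero => simp [genFib, genLucas]
  | succ n ih =>
    obtain ⟨ha, hb⟩ := step_ab k n
    rw [ha, hb]
    ring_nf
    ring_nf at ih
    linear_combination (-1 : ℤ) * ih

/-- Descent: every positive solution of `x² − (k²+1)y² = ±4` comes from the sequences. -/
lemma key (k : ℤ) (hk : 1 ≤ k) (hk2 : k ≠ 2) : ∀ N : ℕ, ∀ x y ε : ℤ, 0 < x → 0 < y →
    y ≤ (N:ℤ) → (ε = 1 ∨ ε = -1) → x^2 - (k^2+1)*y^2 = 4*ε →
    ∃ m : ℕ, x = genLucas (2*k) 1 m ∧ y = 2 * genFib (2*k) 1 m ∧ ε = (-1)^m := by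
  intro N
  induction N with
  | zero =>
    intro x y ε hx hy hyN _ _
    exfalso; omega
  | succ N ih =>
    intro x y ε hx hy hyN hε heq
    have he1 : -1 ≤ ε := by rcases hε with rfl | rfl <;> norm_num
    have he2 : ε ≤ 1 := by rcases hε with rfl | rfl <;> norm_num
    have hk13 : k = 1 ∨ 3 ≤ k := by omega
    have hy3 : y = 1 ∨ y = 2 ∨ 3 ≤ y := by omega
    rcases hy3 with rfl | rfl | hy3
    · -- y = 1
      exfalso
      rcases hε with rfl | rfl
      · -- x² = k² + 5
        rcases hk13 with rfl | hk3
        · have hx2 : x ≤ 2 ∨ 3 ≤ x := by omega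
          rcases hx2 with h | h <;> nlinarith
        · have hx2 : x ≤ k ∨ k + 1 ≤ x := by omega
          rcases hx2 with h | h <;> nlinarith
      · -- x² = k² - 3
        rcases hk13 with rfl | hk3
        · nlinarith
        · have hx2 : x ≤ k - 1 ∨ k ≤ x := by omega
          rcases hx2 with h | h <;> nlinarith
    · -- y = 2
      rcases hε with rfl | rfl
      · exfalso
        rcases Int.even_or_odd x with ⟨u, rfl⟩ | ⟨t, rfl⟩
        · -- (2u)² = 4k² + 8 → u² = k² + 2, impossible
          have hu : 0 < u := by omega
          have h2 : u ≤ k ∨ k + 1 ≤ u := by omega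
          rcases h2 with h | h <;> nlinarith
        · have h7 : 4*(t^2 + t - k^2) = 7 := by ring_nf; ring_nf at heq; linarith
          set a := t^2 + t - k^2 with ha
          omega
      · -- x² = 4k², so x = 2k, the solution at index 1
        have h0 : (x - 2*k)*(x + 2*k) = 0 := by linear_combination heq
        rcases mul_eq_zero.mp h0 with h | h
        · refine ⟨1, ?_, ?_, ?_⟩
          · simp [genLucas]; omega
          · simp [genFib]
          · norm_num
        · exfalso; omega
    · -- 3 ≤ y : descent step, multiply by √(k²+1) − k
      have hy'pos : 0 < x - k*y := by nlinarith
      have hx'pos : 0 < (k^2+1)*y - k*x := by nlinarith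
      have hy'lt : x - k*y < y := by nlinarith
      have heq' : ((k^2+1)*y - k*x)^2 - (k^2+1)*(x - k*y)^2 = 4*(-ε) := by
        linear_combination -heq
      have hyN' : x - k*y ≤ (N:ℤ) := by push_cast at hyN; omega
      have hε' : -ε = 1 ∨ -ε = -1 := by rcases hε with rfl | rfl <;> norm_num
      obtain ⟨m, hxm, hym, hεm⟩ := ih ((k^2+1)*y - k*x) (x - k*y) (-ε) hx'pos hy'pos hyN' hε' heq'
      obtain ⟨ha, hb⟩ := step_ab k m
      refine ⟨m + 1, ?_, ?_, ?_⟩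
      · rw [ha]; linear_combination k * hxm + (k^2+1) * hym
      · rw [hb]; linear_combination hxm + k * hym
      · rw [pow_succ]; linarith [hεm]

theorem solutions_four_k_sq_add_one (k : ℤ) (hk : 1 ≤ k) (hk2 : k ≠ 2)
    (x y : ℤ) (hx : 0 < x) (hy : 0 < y) :
    x ^ 2 - (k ^ 2 + 1) * y ^ 2 = 4 ↔
      ∃ n : ℕ, 1 ≤ n ∧ x = genLucas (2 * k) 1 (2 * n) ∧ y = 2 * genFib (2 * k) 1 (2 * n) := by
  constructor
  · intro heq
    have heq' : x^2 - (k^2+1)*y^2 = 4*1 := by linarith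
    obtain ⟨m, hxm, hym, hεm⟩ := key k hk hk2 y.toNat x y 1 hx hy
      (by simp [Int.self_le_toNat]) (Or.inl rfl) heq'
    rcases Nat.even_or_odd m with ⟨n, hn⟩ | hodd
    · have hm : m = 2 * n := by omega
      subst hm
      refine ⟨n, ?_, hxm, hym⟩
      rcases Nat.eq_zero_or_pos n with rfl | h
      · exfalso; simp [genFib] at hym; omega
      · exact h
    · exfalso
      rw [hodd.neg_one_pow] at hεm
      norm_num at hεm
  · rintro ⟨n, hn, rfl, rfl⟩
    have h := norm_id k (2 * n)
    have h2 : ((-1 : ℤ))^(2*n) = 1 := by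
      rw [pow_mul]; norm_num
    rw [h2] at h
    linarith
end

section
/- Let k > 1 be an integer. Then the positive integer solutions of the equation x² − (k² − 1)·y² = 4 are exactly the pairs (x, y) = (V_n(2k,−1), 2·U_n(2k,−1)) for n ≥ 1. -/
private lemma genStep (k : ℤ) (n : ℕ) :
    genLucas (2 * k) (-1) (n + 1)
        = k * genLucas (2 * k) (-1) n + 2 * (k ^ 2 - 1) * genFib (2 * k) (-1) n ∧
      2 * genFib (2 * k) (-1) (n + 1)
        = genLucas (2 * k) (-1) n + 2 * k * genFib (2 * k) (-1) n := by
  induction n with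
  | zero => constructor <;> simp [genFib, genLucas] <;> ring
  | succ n ih =>
    obtain ⟨h1, h2⟩ := ih
    have e1 : genLucas (2 * k) (-1) (n + 2)
        = 2 * k * genLucas (2 * k) (-1) (n + 1) + (-1) * genLucas (2 * k) (-1) n := rfl
    have e2 : genFib (2 * k) (-1) (n + 2)
        = 2 * k * genFib (2 * k) (-1) (n + 1) + (-1) * genFib (2 * k) (-1) n := rfl
    constructor
    · rw [e1]; linear_combination k * h1 - (k ^ 2 - 1) * h2
    · rw [e2]; linear_combination k * h2 - h1

private lemma genNorm (k : ℤ) (n : ℕ) :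
    (genLucas (2 * k) (-1) n) ^ 2 - (k ^ 2 - 1) * (2 * genFib (2 * k) (-1) n) ^ 2 = 4 := by
  induction n with
  | zero => simp [genFib, genLucas]
  | succ n ih =>
    rw [(genStep k n).1, (genStep k n).2]
    linear_combination ih

private lemma genDescent (k : ℤ) (hk : 1 < k) : ∀ m : ℕ, ∀ x y : ℤ, 0 < x → 0 < y → y ≤ m →
    x ^ 2 - (k ^ 2 - 1) * y ^ 2 = 4 →
    ∃ n : ℕ, 1 ≤ n ∧ x = genLucas (2 * k) (-1) n ∧ y = 2 * genFib (2 * k) (-1) n := by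
  intro m
  induction m with
  | zero => intro x y hx hy hym _; exfalso; omega
  | succ m ih =>
    intro x y hx hy hym heq
    rcases eq_or_lt_of_le (show (1 : ℤ) ≤ y from hy) with h1 | h2
    · -- y = 1 is impossible
      exfalso
      have hx2 : x ^ 2 = k ^ 2 + 3 := by rw [← h1] at heq; linarith
      rcases le_or_gt x k with h | h
      · nlinarith
      · nlinarith
    · -- y ≥ 2 : descend
      set x' : ℤ := k * x - (k ^ 2 - 1) * y with hx'
      set y' : ℤ := k * y - x with hy'
      have heq' : x' ^ 2 - (k ^ 2 - 1) * y' ^ 2 = 4 := by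
        simp only [hx', hy']; linear_combination heq
      have hd : (0 : ℤ) < k ^ 2 - 1 := by nlinarith
      have hx'pos : 0 < x' := by
        have hkx : 0 < k * x := by positivity
        have hsq : ((k ^ 2 - 1) * y) ^ 2 < (k * x) ^ 2 := by
          nlinarith [heq, mul_pos (mul_pos hy hy) hd, sq_nonneg k]
        have := lt_of_pow_lt_pow_left₀ 2 (le_of_lt hkx) hsq
        simp only [hx']; linarith
      have hy'nonneg : 0 ≤ y' := by
        have hy4 : 4 ≤ y ^ 2 := by nlinarith
        have hsq : x ^ 2 ≤ (k * y) ^ 2 := by nlinarith [heq]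
        have := le_of_pow_le_pow_left₀ (by norm_num) (by positivity : (0:ℤ) ≤ k * y) hsq
        simp only [hy']; linarith
      have hy'lt : y' < y := by
        have hsq : ((k - 1) * y) ^ 2 < x ^ 2 := by
          nlinarith [heq, mul_pos (mul_pos hy hy) (show (0:ℤ) < k - 1 by linarith)]
        have := lt_of_pow_lt_pow_left₀ 2 (le_of_lt hx) hsq
        simp only [hy']; nlinarith
      rcases eq_or_lt_of_le hy'nonneg with h0 | h0
      · -- y' = 0 : base solution (2k, 2)
        have hx'2 : x' ^ 2 = 4 := by rw [← h0] at heq'; linarith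
        have hfac : (x' - 2) * (x' + 2) = 0 := by linear_combination hx'2
        have hx'eq : x' = 2 := by
          rcases mul_eq_zero.mp hfac with h | h
          · linarith
          · linarith
        have hxy : x = k * y := by
          have h := h0.symm
          simp only [hy'] at h
          linarith
        have hyx' : y = x' := by simp only [hx', hxy]; ring
        have hyeq : y = 2 := hyx'.trans hx'eq
        refine ⟨1, le_refl 1, ?_, ?_⟩
        · show x = genLucas (2 * k) (-1) 1
          have h : genLucas (2 * k) (-1) 1 = 2 * k := rfl
          rw [h, hxy, hyeq]; ring
        · show y = 2 * genFib (2 * k) (-1) 1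
          have h : genFib (2 * k) (-1) 1 = 1 := rfl
          rw [h, hyeq]; ring
      · -- y' ≥ 1 : apply induction hypothesis
        have hbound : y' ≤ (m : ℤ) := by
          have : y ≤ (m : ℤ) + 1 := by push_cast at hym ⊢; linarith
          omega
        obtain ⟨n, hn1, hxn, hyn⟩ := ih x' y' hx'pos h0 hbound heq'
        have hxrec : x = k * x' + (k ^ 2 - 1) * y' := by
          simp only [hx', hy']; ring
        have hyrec : y = x' + k * y' := by
          simp only [hx', hy']; ring
        refine ⟨n + 1, by omega, ?_, ?_⟩
        · rw [(genStep k n).1]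
          linear_combination hxrec + k * hxn + (k ^ 2 - 1) * hyn
        · rw [(genStep k n).2]
          linear_combination hyrec + hxn + k * hyn

theorem solutions_four_k_sq_sub_one (k : ℤ) (hk : 1 < k) (x y : ℤ) (hx : 0 < x) (hy : 0 < y) :
    x ^ 2 - (k ^ 2 - 1) * y ^ 2 = 4 ↔
      ∃ n : ℕ, 1 ≤ n ∧ x = genLucas (2 * k) (-1) n ∧ y = 2 * genFib (2 * k) (-1) n := by
  constructor
  · intro h
    exact genDescent k hk y.toNat x y hx hy (by omega) h
  · rintro ⟨n, hn, rfl, rfl⟩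
    exact genNorm k n
end
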